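/- Let Θ̂₀ be a symmetric real N×N matrix with vᵀ Θ̂₀ v ≥ λ₀ ‖v‖₂² for all v ∈ ℝ^N, where λ₀ > 0, let η₀ > 0 and σ ≥ 0. Let Θ̂ : [0,∞) → ℝ^{N×N} be continuous with ‖Θ̂(s) − Θ̂₀‖_op ≤ σ for all s ≥ 0. Let g^{lin}, g : [0,∞) → ℝ^N be differentiable with (g^{lin})′(t) = − η₀ Θ̂₀ g^{lin}(t), g′(t) = − η₀ Θ̂(t) g(t), and g^{lin}(0) = g(0). Then for every t ≥ 0, ‖g^{lin}(t) − g(t)‖₂ ≤ η₀ σ t · e^{(σ − λ₀) η₀ t} · ‖g(0)‖₂. -/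

import Mathlib

open Matrix

/-- The Euclidean (ℓ²) norm of a vector in `ℝ^n`. -/
noncomputable def l2norm {n : ℕ} (v : Fin n → ℝ) : ℝ :=
  Real.sqrt (∑ i, v i ^ 2)

/-- The ℓ²→ℓ² operator norm of a real matrix. -/
noncomputable def l2OpNorm {m n : ℕ} (A : Matrix (Fin m) (Fin n) ℝ) : ℝ :=
  ‖(Matrix.toEuclideanLin A).toContinuousLinearMap‖


/-!
Along the flow `g' = -η₀ Θ̂(t) g` one has `⟪g, g'⟫ ≤ (σ - λ₀) η₀ ‖g‖²`, so
`‖g t‖ ≤ e^{(σ - λ₀) η₀ t} ‖g 0‖`. The discrepancy `d = gˡⁱⁿ - g` solves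
`d' = -η₀ Θ̂₀ d + η₀ (Θ̂(t) - Θ̂₀) g`, hence `⟪d, d'⟫ ≤ -η₀ λ₀ ‖d‖² + η₀ σ ‖g‖ ‖d‖`, and `d 0 = 0`.
Both are instances of a one-sided Grönwall estimate: if `⟪f, f'⟫ ≤ K ‖f‖² + C e^{K t} ‖f‖`, then
`e^{-K t} f` has norm growing at rate at most `C`, so `‖f t‖ ≤ e^{K t} (‖f 0‖ + C t)`.
-/

open Set Real
open scoped RealInnerProductSpace

section InnerDerivBound

variable {E : Type*} [NormedAddCommGroup E] [InnerProductSpace ℝ E] {f f' : ℝ → E} {a b : ℝ}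

theorem norm_le_norm_add_mul_of_inner_deriv_le {C : ℝ} (hC : 0 ≤ C)
    (hf : ∀ t ∈ Icc a b, HasDerivAt f (f' t) t)
    (hbound : ∀ t ∈ Icc a b, ⟪f t, f' t⟫ ≤ C * ‖f t‖) :
    ∀ t ∈ Icc a b, ‖f t‖ ≤ ‖f a‖ + C * (t - a) := by
  intro t ht
  refine le_of_forall_pos_le_add fun ε hε => ?_
  -- `√(‖f‖² + ε²)` is a differentiable stand-in for `‖f‖`, with derivative
  -- `⟪f, f'⟫ / √(‖f‖² + ε²) ≤ C`.
  set φ : ℝ → ℝ := fun s => √(‖f s‖ ^ 2 + ε ^ 2)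
  have hpos : ∀ s, 0 < ‖f s‖ ^ 2 + ε ^ 2 := fun s => by positivity
  have hφ : ∀ s ∈ Icc a b, HasDerivAt φ (2 * ⟪f s, f' s⟫ / (2 * φ s)) s := fun s hs =>
    ((hf s hs).norm_sq.add_const (ε ^ 2)).sqrt (hpos s).ne'
  have hreg := image_le_of_deriv_right_le_deriv_boundary (f := φ) (a := a) (b := b)
    (B := fun s => φ a + C * (s - a)) (B' := fun _ => C)
    (fun s hs => (hφ s hs).continuousAt.continuousWithinAt)
    (fun s hs => (hφ s (Ico_subset_Icc_self hs)).hasDerivWithinAt)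
    (by simp) (by fun_prop)
    (fun s _ => ((((hasDerivAt_id' s).sub_const a).const_mul C).const_add (φ a)).hasDerivWithinAt
      |>.congr_deriv (mul_one C))
    (fun s hs => by
      have hφs : 0 < φ s := Real.sqrt_pos.2 (hpos s)
      rw [mul_div_mul_left _ _ two_ne_zero, div_le_iff₀ hφs]
      calc ⟪f s, f' s⟫ ≤ C * ‖f s‖ := hbound s (Ico_subset_Icc_self hs)
        _ ≤ C * φ s := by
          gcongr
          exact Real.le_sqrt_of_sq_le (by nlinarith))
  have hφa : φ a ≤ ‖f a‖ + ε := Real.sqrt_le_iff.2 ⟨by positivity, by nlinarith [norm_nonneg (f a)]⟩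
  calc ‖f t‖ ≤ φ t := Real.le_sqrt_of_sq_le (by nlinarith)
    _ ≤ φ a + C * (t - a) := hreg ht
    _ ≤ ‖f a‖ + C * (t - a) + ε := by linarith

theorem norm_le_exp_mul_of_inner_deriv_le {K C : ℝ} (hC : 0 ≤ C)
    (hf : ∀ t ∈ Icc a b, HasDerivAt f (f' t) t)
    (hbound : ∀ t ∈ Icc a b,
      ⟪f t, f' t⟫ ≤ K * ‖f t‖ ^ 2 + C * exp (K * (t - a)) * ‖f t‖) :
    ∀ t ∈ Icc a b, ‖f t‖ ≤ exp (K * (t - a)) * (‖f a‖ + C * (t - a)) := by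
  set e : ℝ → ℝ := fun s => exp (-(K * (s - a)))
  have he : ∀ s, HasDerivAt e (e s * -K) s := fun s =>
    (((hasDerivAt_id s).sub_const a).const_mul K).neg.exp.congr_deriv (by simp [e])
  have hw : ∀ s ∈ Icc a b, HasDerivAt (fun s => e s • f s) (e s • (f' s - K • f s)) s :=
    fun s hs => ((he s).smul (hf s hs)).congr_deriv (by module)
  have hnorm : ∀ s, ‖e s • f s‖ = e s * ‖f s‖ := fun s => by
    rw [norm_smul, Real.norm_of_nonneg (exp_pos _).le]
  have hinv : ∀ s, e s * exp (K * (s - a)) = 1 := fun s => by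
    simp only [e, ← exp_add, neg_add_cancel, exp_zero]
  have key := norm_le_norm_add_mul_of_inner_deriv_le hC hw fun s hs => by
    rw [inner_smul_left, inner_smul_right, inner_sub_right, inner_smul_right,
      real_inner_self_eq_norm_sq, hnorm, RCLike.conj_to_real]
    calc e s * (e s * (⟪f s, f' s⟫ - K * ‖f s‖ ^ 2))
        ≤ e s * (e s * (C * exp (K * (s - a)) * ‖f s‖)) := by
          rw [← mul_assoc, ← mul_assoc]; gcongr; linarith [hbound s hs]
      _ = C * (e s * ‖f s‖) := by linear_combination (C * e s * ‖f s‖) * hinv s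
  intro t ht
  have hea : e a = 1 := by simp [e]
  have := key t ht
  rw [hnorm, hnorm, hea, one_mul] at this
  calc ‖f t‖ = exp (K * (t - a)) * (e t * ‖f t‖) := by
        linear_combination (-‖f t‖) * hinv t
    _ ≤ exp (K * (t - a)) * (‖f a‖ + C * (t - a)) := by gcongr

end InnerDerivBound

open Matrix

section Euclidean

variable {m n : ℕ}

theorem l2norm_nonneg (v : Fin n → ℝ) : 0 ≤ l2norm v :=
  Real.sqrt_nonneg _

theorem l2norm_zero : l2norm (0 : Fin n → ℝ) = 0 := by
  simp [l2norm]

theorem l2norm_eq_norm_toLp (v : Fin n → ℝ) :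
    l2norm v = ‖(WithLp.toLp 2 v : EuclideanSpace ℝ (Fin n))‖ := by
  simp [EuclideanSpace.norm_eq, l2norm]

theorem dotProduct_eq_inner_toLp (u v : Fin n → ℝ) :
    u ⬝ᵥ v = ⟪(WithLp.toLp 2 u : EuclideanSpace ℝ (Fin n)), WithLp.toLp 2 v⟫ := by
  simp [EuclideanSpace.inner_toLp_toLp, dotProduct_comm]

theorem abs_dotProduct_mulVec_le (M : Matrix (Fin m) (Fin n) ℝ) (u : Fin m → ℝ) (v : Fin n → ℝ) :
    |u ⬝ᵥ M *ᵥ v| ≤ l2OpNorm M * l2norm u * l2norm v := by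
  rw [dotProduct_eq_inner_toLp, l2norm_eq_norm_toLp, l2norm_eq_norm_toLp]
  calc _ ≤ ‖(WithLp.toLp 2 u : EuclideanSpace ℝ (Fin m))‖ * ‖WithLp.toLp 2 (M *ᵥ v)‖ :=
        abs_real_inner_le_norm _ _
    _ ≤ ‖(WithLp.toLp 2 u : EuclideanSpace ℝ (Fin m))‖ *
          (l2OpNorm M * ‖(WithLp.toLp 2 v : EuclideanSpace ℝ (Fin n))‖) := by
      gcongr
      exact (Matrix.toEuclideanLin M).toContinuousLinearMap.le_opNorm _
    _ = _ := by ring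

theorem coercive_of_l2OpNorm_sub_le {A B : Matrix (Fin n) (Fin n) ℝ} {lam σ : ℝ}
    (hA : ∀ v, lam * l2norm v ^ 2 ≤ v ⬝ᵥ A *ᵥ v) (hB : l2OpNorm (B - A) ≤ σ) (v : Fin n → ℝ) :
    (lam - σ) * l2norm v ^ 2 ≤ v ⬝ᵥ B *ᵥ v := by
  have hsplit : v ⬝ᵥ B *ᵥ v = v ⬝ᵥ A *ᵥ v + v ⬝ᵥ (B - A) *ᵥ v := by
    rw [sub_mulVec, dotProduct_sub]; ring
  have hpert : -(σ * l2norm v ^ 2) ≤ v ⬝ᵥ (B - A) *ᵥ v := by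
    have hcs := abs_dotProduct_mulVec_le (B - A) v v
    have hop : l2OpNorm (B - A) * l2norm v * l2norm v ≤ σ * l2norm v ^ 2 := by
      rw [mul_assoc, ← sq]; gcongr
    linarith [neg_abs_le (v ⬝ᵥ (B - A) *ᵥ v)]
  linarith [hA v]

theorem l2norm_le_exp_mul_of_dotProduct_deriv_le {f f' : ℝ → Fin n → ℝ} {a b K C : ℝ}
    (hC : 0 ≤ C) (hf : ∀ t ∈ Icc a b, HasDerivAt f (f' t) t)
    (hbound : ∀ t ∈ Icc a b,
      f t ⬝ᵥ f' t ≤ K * l2norm (f t) ^ 2 + C * exp (K * (t - a)) * l2norm (f t)) :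
    ∀ t ∈ Icc a b, l2norm (f t) ≤ exp (K * (t - a)) * (l2norm (f a) + C * (t - a)) := by
  simp only [l2norm_eq_norm_toLp, dotProduct_eq_inner_toLp] at hbound ⊢
  exact norm_le_exp_mul_of_inner_deriv_le (f' := fun t => WithLp.toLp 2 (f' t)) hC
    (fun t ht => (PiLp.hasFDerivAt_toLp 2 (f t)).comp_hasDerivAt t (hf t ht)) hbound

end Euclidean

section KernelFlow

variable {n : ℕ} {η : ℝ}

theorem l2norm_le_exp_mul_of_coercive_flow {Θ : ℝ → Matrix (Fin n) (Fin n) ℝ} {μ : ℝ}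
    {g : ℝ → Fin n → ℝ} (hη : 0 ≤ η)
    (hΘ : ∀ t, 0 ≤ t → ∀ v, μ * l2norm v ^ 2 ≤ v ⬝ᵥ Θ t *ᵥ v)
    (hg : ∀ t, 0 ≤ t → HasDerivAt g (-(η • Θ t *ᵥ g t)) t) (t : ℝ) (ht : 0 ≤ t) :
    l2norm (g t) ≤ exp (-(μ * η) * t) * l2norm (g 0) := by
  have key := l2norm_le_exp_mul_of_dotProduct_deriv_le (a := 0) (b := t) (K := -(μ * η)) le_rfl
    (fun s hs => hg s hs.1) (fun s hs => by
      have := mul_le_mul_of_nonneg_left (hΘ s hs.1 (g s)) hη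
      rw [dotProduct_neg, dotProduct_smul, smul_eq_mul]
      linarith) t ⟨ht, le_rfl⟩
  simpa using key

theorem dotProduct_sub_flow_sub_le {Θ₀ Θ : Matrix (Fin n) (Fin n) ℝ} {lam σ : ℝ} (hη : 0 ≤ η)
    (hΘ₀ : ∀ v, lam * l2norm v ^ 2 ≤ v ⬝ᵥ Θ₀ *ᵥ v) (hΘ : l2OpNorm (Θ - Θ₀) ≤ σ)
    (x y : Fin n → ℝ) :
    (x - y) ⬝ᵥ (-(η • Θ₀ *ᵥ x) - -(η • Θ *ᵥ y)) ≤
      -(η * lam) * l2norm (x - y) ^ 2 + η * σ * l2norm y * l2norm (x - y) := by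
  have hsplit : (x - y) ⬝ᵥ (-(η • Θ₀ *ᵥ x) - -(η • Θ *ᵥ y)) =
      -(η * ((x - y) ⬝ᵥ Θ₀ *ᵥ (x - y))) + η * ((x - y) ⬝ᵥ (Θ - Θ₀) *ᵥ y) := by
    simp only [mulVec_sub, sub_mulVec, dotProduct_sub, dotProduct_neg, dotProduct_smul,
      smul_eq_mul]
    ring
  have hpert : (x - y) ⬝ᵥ (Θ - Θ₀) *ᵥ y ≤ σ * l2norm y * l2norm (x - y) :=
    calc _ ≤ l2OpNorm (Θ - Θ₀) * l2norm (x - y) * l2norm y :=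
          (le_abs_self _).trans (abs_dotProduct_mulVec_le _ _ _)
      _ ≤ σ * l2norm (x - y) * l2norm y := by gcongr <;> exact l2norm_nonneg _
      _ = _ := by ring
  rw [hsplit]
  linarith [mul_le_mul_of_nonneg_left (hΘ₀ (x - y)) hη, mul_le_mul_of_nonneg_left hpert hη]

end KernelFlow

theorem residual_discrepancy_gronwall_bound_general {N : ℕ}
    (Θ₀ : Matrix (Fin N) (Fin N) ℝ)
    (lam₀ : ℝ)
    (hΘ₀lb : ∀ v : Fin N → ℝ, lam₀ * l2norm v ^ 2 ≤ v ⬝ᵥ Θ₀.mulVec v)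
    (η₀ σ : ℝ) (hη₀ : 0 < η₀) (hσ : 0 ≤ σ)
    (Θ : ℝ → Matrix (Fin N) (Fin N) ℝ)
    (hΘclose : ∀ s : ℝ, 0 ≤ s → l2OpNorm (Θ s - Θ₀) ≤ σ)
    (glin g : ℝ → (Fin N → ℝ))
    (hglin : ∀ t : ℝ, 0 ≤ t → HasDerivAt glin (-(η₀ • Θ₀.mulVec (glin t))) t)
    (hgf : ∀ t : ℝ, 0 ≤ t → HasDerivAt g (-(η₀ • (Θ t).mulVec (g t))) t)
    (h0 : glin 0 = g 0) :
    ∀ t : ℝ, 0 ≤ t →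
      l2norm (glin t - g t) ≤
        η₀ * σ * t * Real.exp ((σ - lam₀) * η₀ * t) * l2norm (g 0) := by
  intro T hT
  have hgrowth := l2norm_le_exp_mul_of_coercive_flow hη₀.le
    (fun t ht => coercive_of_l2OpNorm_sub_le hΘ₀lb (hΘclose t ht)) hgf
  set C := η₀ * σ * exp (η₀ * σ * T) * l2norm (g 0)
  have hC : 0 ≤ C := by have := l2norm_nonneg (g 0); positivity
  -- `η₀ σ ‖g t‖ e^{η₀ λ₀ t} ≤ η₀ σ e^{η₀ σ t} ‖g 0‖`, which is increasing in `t`: bound it by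
  -- its value at `T`.
  have hforcing : ∀ t ∈ Icc 0 T, η₀ * σ * l2norm (g t) ≤ C * exp (-(η₀ * lam₀) * (t - 0)) := by
    intro t ht
    have hexp : exp (-((lam₀ - σ) * η₀) * t) = exp (η₀ * σ * t) * exp (-(η₀ * lam₀) * (t - 0)) := by
      rw [← exp_add]; ring_nf
    calc η₀ * σ * l2norm (g t) ≤ η₀ * σ * (exp (-((lam₀ - σ) * η₀) * t) * l2norm (g 0)) := by
          gcongr; exact hgrowth t ht.1
      _ = η₀ * σ * exp (η₀ * σ * t) * l2norm (g 0) * exp (-(η₀ * lam₀) * (t - 0)) := by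
          rw [hexp]; ring
      _ ≤ η₀ * σ * exp (η₀ * σ * T) * l2norm (g 0) * exp (-(η₀ * lam₀) * (t - 0)) := by
          have := l2norm_nonneg (g 0); gcongr; exact ht.2
  have key := l2norm_le_exp_mul_of_dotProduct_deriv_le (f := fun t => glin t - g t) hC
    (fun t ht => (hglin t ht.1).sub (hgf t ht.1))
    (fun t ht => (dotProduct_sub_flow_sub_le hη₀.le hΘ₀lb (hΘclose t ht.1) _ _).trans
      ((add_le_add_iff_left _).2 (mul_le_mul_of_nonneg_right (hforcing t ht) (l2norm_nonneg _))))
    T ⟨hT, le_rfl⟩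
  rw [h0, sub_self, l2norm_zero, sub_zero, zero_add] at key
  calc _ ≤ _ := key
    _ = _ := by
      rw [show (σ - lam₀) * η₀ * T = -(η₀ * lam₀) * T + η₀ * σ * T by ring, exp_add]
      ring

/-- Grönwall-type bound on the discrepancy between the residual `g` of
the original network (kernel `Θ̂(t)`, with `‖Θ̂(s) − Θ̂₀‖_op ≤ σ`) and the residual `g^lin`
of the linearized network (kernel frozen at `Θ̂₀`, which is symmetric and `≥ λ₀`):
`‖g^lin(t) − g(t)‖₂ ≤ η₀ σ t e^{(σ−λ₀)η₀ t} ‖g(0)‖₂`. -/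
theorem residual_discrepancy_gronwall_bound {N : ℕ}
    (Θ₀ : Matrix (Fin N) (Fin N) ℝ) (hΘ₀sym : Θ₀.IsSymm)
    (lam₀ : ℝ) (hlam₀ : 0 < lam₀)
    (hΘ₀lb : ∀ v : Fin N → ℝ, lam₀ * l2norm v ^ 2 ≤ v ⬝ᵥ Θ₀.mulVec v)
    (η₀ σ : ℝ) (hη₀ : 0 < η₀) (hσ : 0 ≤ σ)
    (Θ : ℝ → Matrix (Fin N) (Fin N) ℝ) (hΘcont : ContinuousOn Θ (Set.Ici 0))
    (hΘclose : ∀ s : ℝ, 0 ≤ s → l2OpNorm (Θ s - Θ₀) ≤ σ)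
    (glin g : ℝ → (Fin N → ℝ))
    (hglin : ∀ t : ℝ, 0 ≤ t → HasDerivAt glin (-(η₀ • Θ₀.mulVec (glin t))) t)
    (hgf : ∀ t : ℝ, 0 ≤ t → HasDerivAt g (-(η₀ • (Θ t).mulVec (g t))) t)
    (h0 : glin 0 = g 0) :
    ∀ t : ℝ, 0 ≤ t →
      l2norm (glin t - g t) ≤
        η₀ * σ * t * Real.exp ((σ - lam₀) * η₀ * t) * l2norm (g 0) :=
  residual_discrepancy_gronwall_bound_general Θ₀ lam₀ hΘ₀lb η₀ σ hη₀ hσ Θ hΘclose glin g hglin hgf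
    h0
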